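/- For odd n ≥ 3: among all graphs on n vertices, the minimum number of edges of a graph with matching preclusion number exactly 2 is n − 1. -/

import Mathlib

open SimpleGraph

/-- An almost-perfect matching: a matching covering all vertices except exactly one. -/
def SimpleGraph.Subgraph.IsAlmostPerfectMatching {V : Type*} {G : SimpleGraph V}
    (M : G.Subgraph) : Prop :=
  M.IsMatching ∧ ∃ v : V, M.verts = {v}ᶜ

/-- `G` has a perfect matching or an almost-perfect matching. -/
def SimpleGraph.HasGoodMatching {V : Type*} (G : SimpleGraph V) : Prop :=
  (∃ M : G.Subgraph, M.IsPerfectMatching) ∨ (∃ M : G.Subgraph, M.IsAlmostPerfectMatching)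

/-- The matching preclusion number of `G`. -/
noncomputable def SimpleGraph.mp {V : Type*} [Fintype V] (G : SimpleGraph V) : ℕ :=
  sInf { k | ∃ F : Finset (Sym2 V), ↑F ⊆ G.edgeSet ∧ F.card = k ∧
    ¬ (G.deleteEdges ↑F).HasGoodMatching }

/-! The path `P_n` has `n - 1` edges and `mp P_n = 2`: deleting the edges `01` and `12` isolates
the vertices `0` and `1`, while after deleting any single edge there is still an almost-perfect
matching, which leaves out a suitable even vertex and pairs up consecutive vertices on either side
of it.

Conversely, let `G` have odd order and `mp G = 2`. Two disjoint odd vertex sets with no edges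
leaving them cannot both be covered by a matching that misses at most one vertex, so `G` has
exactly one odd component, and no even component is a tree: deleting the edge at a leaf would make
the leaf a second such set. A connected graph on `k` vertices has at least `k - 1` edges, and at
least `k` when it is not a tree; summing over the components gives `|E(G)| ≥ n - 1`. -/

-- Pairing `{0,1}, …, {m-2,m-1}` below the even vertex `m` and `{m+1,m+2}, …` above it.
def pathPartner (m x : ℕ) : ℕ :=
  if (x < m ↔ x % 2 = 0) then x + 1 else x - 1

theorem pathPartner_lt {n m x : ℕ} (hn : n % 2 = 1) (hm : m % 2 = 0) (hmn : m < n)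
    (hx : x < n) : pathPartner m x < n := by
  unfold pathPartner; split_ifs <;> omega

theorem pathPartner_ne {m x : ℕ} (hm : m % 2 = 0) (hxm : x ≠ m) : pathPartner m x ≠ m := by
  unfold pathPartner; split_ifs <;> omega

theorem pathPartner_pathPartner {m x : ℕ} (hm : m % 2 = 0) (hxm : x ≠ m) :
    pathPartner m (pathPartner m x) = x := by
  simp only [pathPartner]; split_ifs <;> omega

theorem pathPartner_eq_succ_or_succ_eq {m x : ℕ} (hm : m % 2 = 0) (hxm : x ≠ m) :
    x + 1 = pathPartner m x ∨ pathPartner m x + 1 = x := by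
  unfold pathPartner; split_ifs <;> omega

namespace SimpleGraph

variable {V : Type*} {G : SimpleGraph V}

theorem Subgraph.IsMatching.even_ncard_of_subset_of_closed [Finite V] {M : G.Subgraph}
    (hM : M.IsMatching) {A : Set V} (hAM : A ⊆ M.verts)
    (hA : ∀ a ∈ A, ∀ b, G.Adj a b → b ∈ A) : Even A.ncard := by
  have hMA : (M.induce A).IsMatching := fun v hv ↦ by
    obtain ⟨w, hvw, hw⟩ := hM (hAM hv)
    exact ⟨w, ⟨hv, hA v hv w (M.adj_sub hvw), hvw⟩, fun y hy ↦ hw y hy.2.2⟩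
  have := Fintype.ofFinite A
  rw [Set.ncard_eq_toFinset_card']
  exact @hMA.even_card _ _ _ ‹Fintype A›

theorem Subgraph.exists_isMatching_verts_eq_of_involution {S : Set V} (f : V → V)
    (hfS : ∀ x ∈ S, f x ∈ S) (hff : ∀ x ∈ S, f (f x) = x) (hadj : ∀ x ∈ S, G.Adj x (f x)) :
    ∃ M : G.Subgraph, M.IsMatching ∧ M.verts = S :=
  ⟨{ verts := S
     Adj := fun a b ↦ a ∈ S ∧ b = f a
     adj_sub := by rintro a _ ⟨ha, rfl⟩; exact hadj a ha
     edge_vert := And.left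
     symm := ⟨fun a _ ⟨ha, hb⟩ ↦ ⟨hb ▸ hfS a ha, by rw [hb, hff a ha]⟩⟩ },
   fun v hv ↦ ⟨f v, ⟨hv, rfl⟩, fun _ h ↦ h.2⟩, rfl⟩

theorem HasGoodMatching.exists_isMatching_subsingleton_compl (hG : G.HasGoodMatching) :
    ∃ M : G.Subgraph, M.IsMatching ∧ M.vertsᶜ.Subsingleton := by
  obtain ⟨M, hM⟩ | ⟨M, hM, v, hv⟩ := hG
  · exact ⟨M, hM.1, by simp [hM.2.verts_eq_univ]⟩
  · exact ⟨M, hM, by simp [hv]⟩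

theorem not_hasGoodMatching_of_odd_closed [Finite V] {A B : Set V} (hAB : Disjoint A B)
    (hA : Odd A.ncard) (hB : Odd B.ncard)
    (hAc : ∀ a ∈ A, ∀ b, G.Adj a b → b ∈ A) (hBc : ∀ a ∈ B, ∀ b, G.Adj a b → b ∈ B) :
    ¬ G.HasGoodMatching := by
  intro hG
  obtain ⟨M, hM, hMc⟩ := hG.exists_isMatching_subsingleton_compl
  have exists_unmatched {S : Set V} (hS : Odd S.ncard) (hSc : ∀ a ∈ S, ∀ b, G.Adj a b → b ∈ S) :
      ∃ v ∈ S, v ∉ M.verts := by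
    by_contra! h
    exact Nat.not_even_iff_odd.2 hS (hM.even_ncard_of_subset_of_closed h hSc)
  obtain ⟨a, ha, haM⟩ := exists_unmatched hA hAc
  obtain ⟨b, hb, hbM⟩ := exists_unmatched hB hBc
  exact hAB.ne_of_mem ha hb (hMc haM hbM)

section MatchingPreclusion

variable [Fintype V]

theorem mp_le_card {F : Finset (Sym2 V)} (hF : ↑F ⊆ G.edgeSet)
    (hbad : ¬ (G.deleteEdges ↑F).HasGoodMatching) : G.mp ≤ F.card :=
  Nat.sInf_le ⟨F, hF, rfl, hbad⟩

theorem hasGoodMatching_deleteEdges_of_card_lt_mp {F : Finset (Sym2 V)} (hF : ↑F ⊆ G.edgeSet)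
    (hFG : F.card < G.mp) : (G.deleteEdges ↑F).HasGoodMatching := by
  by_contra hbad
  exact (mp_le_card hF hbad).not_gt hFG

theorem mp_eq_card {F : Finset (Sym2 V)} (hF : ↑F ⊆ G.edgeSet)
    (hbad : ¬ (G.deleteEdges ↑F).HasGoodMatching)
    (hgood : ∀ F' : Finset (Sym2 V), ↑F' ⊆ G.edgeSet → F'.card < F.card →
      (G.deleteEdges ↑F').HasGoodMatching) : G.mp = F.card := by
  refine (mp_le_card hF hbad).antisymm (le_csInf ⟨_, F, hF, rfl, hbad⟩ ?_)
  rintro _ ⟨F', hF', rfl, hbad'⟩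
  by_contra! hlt
  exact hbad' (hgood F' hF' hlt)

theorem hasGoodMatching_of_mp_pos (h : 0 < G.mp) : G.HasGoodMatching := by
  simpa using hasGoodMatching_deleteEdges_of_card_lt_mp (F := ∅) (by simp) h

theorem hasGoodMatching_deleteEdges_of_one_lt_mp (h : 1 < G.mp) {e : Sym2 V}
    (he : e ∈ G.edgeSet) : (G.deleteEdges {e}).HasGoodMatching := by
  simpa using hasGoodMatching_deleteEdges_of_card_lt_mp (F := {e}) (by simpa) h

end MatchingPreclusion

namespace ConnectedComponent

variable (C : G.ConnectedComponent)

theorem ncard_edgeSet_toSubgraph :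
    C.toSubgraph.edgeSet.ncard = Nat.card C.toSimpleGraph.edgeSet := by
  rw [← Subgraph.image_coe_edgeSet_coe, coe_toSubgraph,
    Set.ncard_image_of_injective _ (Sym2.map.injective Subtype.val_injective)]
  rfl

theorem ncard_supp_le_ncard_edgeSet_toSubgraph_add_one :
    C.supp.ncard ≤ C.toSubgraph.edgeSet.ncard + 1 := by
  rw [ncard_edgeSet_toSubgraph, ← Nat.card_coe_set_eq]
  exact C.connected_toSimpleGraph.card_vert_le_card_edgeSet_add_one

theorem exists_existsUnique_adj_of_ncard_supp_eq [Finite V] (h2 : 2 ≤ C.supp.ncard)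
    (htree : C.supp.ncard = C.toSubgraph.edgeSet.ncard + 1) :
    ∃ u ∈ C.supp, ∃! w, G.Adj u w := by
  have hT : C.toSimpleGraph.IsTree := by
    rw [isTree_iff_connected_and_card, ← ncard_edgeSet_toSubgraph]
    exact ⟨C.connected_toSimpleGraph, htree.symm⟩
  have : Nontrivial C.supp := by
    rw [← Finite.one_lt_card_iff_nontrivial, Nat.card_coe_set_eq]; omega
  classical
  have := Fintype.ofFinite C.supp
  obtain ⟨u, hu⟩ := hT.exists_vert_degree_one_of_nontrivial
  obtain ⟨w, huw, hw⟩ := degree_eq_one_iff_existsUnique_adj.mp hu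
  refine ⟨u, u.2, w, huw, fun x hux ↦ ?_⟩
  exact congrArg Subtype.val (hw ⟨x, C.mem_supp_of_adj_mem_supp u.2 hux⟩ hux)

variable [Finite V] [Fintype G.ConnectedComponent]

theorem sum_ncard_supp : ∑ C : G.ConnectedComponent, C.supp.ncard = Nat.card V := by
  rw [← finsum_eq_sum_of_fintype, ← Set.ncard_iUnion_of_finite (fun _ ↦ Set.toFinite _)
    (pairwise_disjoint_supp_connectedComponent G), iUnion_connectedComponentSupp, Set.ncard_univ]

theorem sum_ncard_edgeSet_toSubgraph_le :
    ∑ C : G.ConnectedComponent, C.toSubgraph.edgeSet.ncard ≤ G.edgeSet.ncard := by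
  have hdisj : Pairwise (Function.onFun Disjoint
      fun C : G.ConnectedComponent ↦ C.toSubgraph.edgeSet) := by
    intro C C' hCC'
    refine Set.disjoint_left.mpr fun e he he' ↦ hCC' ?_
    induction e using Sym2.ind with
    | _ v w => exact eq_of_common_vertex (C.toSubgraph.edge_vert he) (C'.toSubgraph.edge_vert he')
  rw [← finsum_eq_sum_of_fintype, ← Set.ncard_iUnion_of_finite (fun _ ↦ Set.toFinite _) hdisj]
  exact Set.ncard_le_ncard (Set.iUnion_subset fun C ↦ C.toSubgraph.edgeSet_subset)

end ConnectedComponent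

theorem not_hasGoodMatching_deleteEdges_of_pendant [Finite V] {u w : V}
    (hw : ∀ x, G.Adj u x → x = w) {B : Set V} (huB : u ∉ B) (hB : Odd B.ncard)
    (hBc : ∀ a ∈ B, ∀ b, G.Adj a b → b ∈ B) : ¬ (G.deleteEdges {s(u, w)}).HasGoodMatching := by
  refine not_hasGoodMatching_of_odd_closed (A := {u}) (Set.disjoint_singleton_left.mpr huB)
    (by simp) hB ?_ fun a ha b hab ↦ hBc a ha b (deleteEdges_le _ hab)
  rintro a rfl b ⟨hab, hne⟩
  obtain rfl := hw b hab
  exact (hne ⟨rfl, hab.ne⟩).elim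

theorem HasGoodMatching.card_le_ncard_edgeSet_add_one [Finite V] (hG : G.HasGoodMatching)
    (hV : Odd (Nat.card V)) (hGe : ∀ e ∈ G.edgeSet, (G.deleteEdges {e}).HasGoodMatching) :
    Nat.card V ≤ G.edgeSet.ncard + 1 := by
  classical
  have := Fintype.ofFinite G.ConnectedComponent
  have hclosed (C : G.ConnectedComponent) : ∀ a ∈ C.supp, ∀ b, G.Adj a b → b ∈ C.supp :=
    fun _ ha _ hab ↦ C.mem_supp_of_adj_mem_supp ha hab
  obtain ⟨C₀, hC₀⟩ : ∃ C₀ : G.ConnectedComponent, Odd C₀.supp.ncard :=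
    Set.nonempty_of_ncard_ne_zero ((G.odd_ncard_oddComponents.mpr hV).pos.ne')
  have hsupp_disjoint {C : G.ConnectedComponent} (hC : C ≠ C₀) : Disjoint C.supp C₀.supp :=
    pairwise_disjoint_supp_connectedComponent G hC
  have heven {C : G.ConnectedComponent} (hC : C ≠ C₀) : Even C.supp.ncard := by
    by_contra hodd
    exact not_hasGoodMatching_of_odd_closed (hsupp_disjoint hC) (Nat.not_even_iff_odd.mp hodd)
      hC₀ (hclosed C) (hclosed C₀) hG
  have hbound {C : G.ConnectedComponent} (hC : C ≠ C₀) :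
      C.supp.ncard ≤ C.toSubgraph.edgeSet.ncard := by
    by_contra! hlt
    have h2 : 2 ≤ C.supp.ncard := by
      have := (Set.ncard_pos C.supp.toFinite).mpr C.nonempty_supp
      have := heven hC
      rw [Nat.even_iff] at this
      omega
    obtain ⟨u, hu, w, huw, hw⟩ := C.exists_existsUnique_adj_of_ncard_supp_eq h2
      (le_antisymm C.ncard_supp_le_ncard_edgeSet_toSubgraph_add_one hlt)
    exact not_hasGoodMatching_deleteEdges_of_pendant hw
      ((hsupp_disjoint hC).notMem_of_mem_left hu) hC₀ (hclosed C₀) (hGe _ huw)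
  calc Nat.card V = ∑ C : G.ConnectedComponent, C.supp.ncard :=
        ConnectedComponent.sum_ncard_supp.symm
    _ ≤ ∑ C : G.ConnectedComponent, (C.toSubgraph.edgeSet.ncard + if C = C₀ then 1 else 0) := by
      refine Finset.sum_le_sum fun C _ ↦ ?_
      split_ifs with hC
      · exact hC ▸ C₀.ncard_supp_le_ncard_edgeSet_toSubgraph_add_one
      · exact hbound hC
    _ = ∑ C : G.ConnectedComponent, C.toSubgraph.edgeSet.ncard + 1 := by
      simp [Finset.sum_add_distrib]
    _ ≤ G.edgeSet.ncard + 1 := by gcongr; exact ConnectedComponent.sum_ncard_edgeSet_toSubgraph_le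

theorem hasGoodMatching_of_adj_pathPartner {n m : ℕ} (hn : Odd n) (hm : Even m) (hmn : m < n)
    {H : SimpleGraph (Fin n)}
    (hadj : ∀ x y : Fin n, x.val ≠ m → y.val = pathPartner m x → H.Adj x y) :
    H.HasGoodMatching := by
  rw [Nat.odd_iff] at hn
  rw [Nat.even_iff] at hm
  -- `% n` only makes `f` total; it does nothing on the vertices `x ≠ m` that matter.
  let f (x : Fin n) : Fin n := ⟨pathPartner m x % n, Nat.mod_lt _ x.pos⟩
  have hf {x : Fin n} (hx : x.val ≠ m) : (f x).val = pathPartner m x :=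
    Nat.mod_eq_of_lt (pathPartner_lt hn hm hmn x.isLt)
  obtain ⟨M, hM, hMverts⟩ := Subgraph.exists_isMatching_verts_eq_of_involution
    (S := {x : Fin n | x.val ≠ m}) f
    (fun x hx ↦ by simpa [hf hx] using pathPartner_ne hm hx)
    (fun x hx ↦ by
      have hfx : (f x).val ≠ m := by simpa [hf hx] using pathPartner_ne hm hx
      ext; rw [hf hfx, hf hx, pathPartner_pathPartner hm hx])
    (fun x hx ↦ hadj x (f x) hx (hf hx))
  refine Or.inr ⟨M, hM, ⟨m, hmn⟩, ?_⟩
  ext x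
  simp [hMverts, Fin.ext_iff]

theorem hasGoodMatching_pathGraph_deleteEdges {n : ℕ} (hn : Odd n) {F : Finset (Sym2 (Fin n))}
    (hF : F.card ≤ 1) : ((pathGraph n).deleteEdges F).HasGoodMatching := by
  have : NeZero n := ⟨hn.pos.ne'⟩
  obtain ⟨e, he⟩ := Finset.card_le_one_iff_subset_singleton.mp hF
  induction e using Sym2.ind with
  | _ x y =>
  -- Leave out an even endpoint of `e`; if both are odd, `e` is not an edge of the path at all.
  obtain ⟨m, hm, hmn, hmxy⟩ : ∃ m, m % 2 = 0 ∧ m < n ∧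
      (m = x.val ∨ m = y.val ∨ (x.val % 2 = 1 ∧ y.val % 2 = 1)) := by
    by_cases hx : x.val % 2 = 0
    · exact ⟨x, hx, x.isLt, Or.inl rfl⟩
    by_cases hy : y.val % 2 = 0
    · exact ⟨y, hy, y.isLt, Or.inr (Or.inl rfl)⟩
    exact ⟨0, rfl, hn.pos, Or.inr (Or.inr (by omega))⟩
  refine hasGoodMatching_of_adj_pathPartner hn (Nat.even_iff.mpr hm) hmn fun a b ha hb ↦ ?_
  have hbm : b.val ≠ m := hb ▸ pathPartner_ne hm ha
  have hab := hb ▸ pathPartner_eq_succ_or_succ_eq (m := m) (x := a.val) hm ha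
  rw [deleteEdges_adj]
  refine ⟨pathGraph_adj.mpr hab, fun habF ↦ ?_⟩
  have := Finset.mem_singleton.mp (he habF)
  simp only [Sym2.eq_iff, Fin.ext_iff] at this
  omega

theorem ncard_edgeSet_pathGraph (n : ℕ) : (pathGraph n).edgeSet.ncard = n - 1 := by
  cases n with
  | zero => simp [Set.eq_empty_of_isEmpty (pathGraph 0).edgeSet]
  | succ m =>
  have hrange :
      (pathGraph (m + 1)).edgeSet = Set.range fun i : Fin m ↦ s(i.castSucc, i.succ) := by
    ext e
    induction e using Sym2.ind with
    | _ x y =>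
    simp only [mem_edgeSet, pathGraph_adj, Set.mem_range, Sym2.eq_iff, Fin.ext_iff,
      Fin.val_castSucc, Fin.val_succ]
    constructor
    · rintro (h | h)
      · exact ⟨⟨x, by omega⟩, Or.inl ⟨rfl, h⟩⟩
      · exact ⟨⟨y, by omega⟩, Or.inr ⟨rfl, h⟩⟩
    · rintro ⟨i, ⟨hx, hy⟩ | ⟨hy, hx⟩⟩ <;> omega
  rw [hrange, Set.ncard_range_of_injective, Nat.card_eq_fintype_card, Fintype.card_fin,
    Nat.add_sub_cancel]
  intro i j hij
  simp only [Sym2.eq_iff, Fin.ext_iff, Fin.val_castSucc, Fin.val_succ] at hij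
  omega

theorem mp_pathGraph {n : ℕ} (hn : Odd n) (h3 : 3 ≤ n) : (pathGraph n).mp = 2 := by
  let v₀ : Fin n := ⟨0, by omega⟩
  let v₁ : Fin n := ⟨1, by omega⟩
  let v₂ : Fin n := ⟨2, by omega⟩
  let F : Finset (Sym2 (Fin n)) := {s(v₀, v₁), s(v₁, v₂)}
  have hF : F.card = 2 :=
    Finset.card_pair (by simp [v₀, v₂, Fin.ext_iff])
  rw [← hF]
  refine mp_eq_card ?_ ?_ fun _ _ hF' ↦ hasGoodMatching_pathGraph_deleteEdges hn (by omega)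
  · simp [F, Set.insert_subset_iff, pathGraph_adj, v₀, v₁, v₂]
  · have hisolated {v : Fin n} (hv : v = v₀ ∨ v = v₁) (b : Fin n) :
        ¬ ((pathGraph n).deleteEdges ↑F).Adj v b := by
      rcases hv with rfl | rfl <;>
        simp [F, deleteEdges_adj, pathGraph_adj, v₀, v₁, v₂, Fin.ext_iff] <;> omega
    refine not_hasGoodMatching_of_odd_closed (A := {v₀}) (B := {v₁}) (by simp [v₀, v₁])
      (by simp) (by simp) ?_ ?_
    · rintro a rfl b hab; exact absurd hab (hisolated (Or.inl rfl) b)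
    · rintro a rfl b hab; exact absurd hab (hisolated (Or.inr rfl) b)

end SimpleGraph

theorem stmt14 (n : ℕ) (hn : Odd n) (h3 : 3 ≤ n) :
    IsLeast { m | ∃ G : SimpleGraph (Fin n), G.mp = 2 ∧ G.edgeSet.ncard = m } (n - 1) := by
  refine ⟨⟨pathGraph n, mp_pathGraph hn h3, ncard_edgeSet_pathGraph n⟩, ?_⟩
  rintro _ ⟨G, hG, rfl⟩
  have := (hasGoodMatching_of_mp_pos (by omega : 0 < G.mp)).card_le_ncard_edgeSet_add_one
    (by simpa using hn) fun e he ↦ hasGoodMatching_deleteEdges_of_one_lt_mp (by omega) he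
  simp only [Nat.card_eq_fintype_card, Fintype.card_fin] at this
  omega
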